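/- Let G be a connected graph with |E| ≤ βn(n-1)/2 edges carrying independent Exp(1) weights, and let S_m be the sum of the m lightest edge weights. Then for all φ ≤ (n-1)/n with φn integral and all c ∈ [0, 2φ²/e]: P(S_{φn} ≤ c/β) ≤ exp(φn(2 + ln(c/(2φ²)))). -/

import Mathlib

open MeasureTheory ProbabilityTheory Real Finset
open scoped ENNReal

/-!
Union bound over the `C(E, m)` sets of `m` edges. The sum of `m` i.i.d. `Exp(1)` weights
obeys the Chernoff lower-tail bound `P(∑ ≤ t) ≤ e^(m - t) (t/m)^m` (optimal parameter
`θ = m/t - 1`), and `C(E, m) ≤ (e E / m)^m`, so `P(S_m ≤ t) ≤ (e² E t / m²)^m`.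
For `t = c/β`, `m = φn` and `2E ≤ β n²` the base is at most `e² c / (2φ²)`.
-/

lemma exponentialPDF_mul_ofReal_exp_mul (r t x : ℝ) :
    exponentialPDF r x * ENNReal.ofReal (exp (t * x)) =
      (Set.Ici 0).indicator (fun x ↦ ENNReal.ofReal (r * exp ((t - r) * x))) x := by
  rcases lt_or_ge x 0 with hx | hx
  · have hx' : x ∉ Set.Ici 0 := not_le.2 hx
    simp [exponentialPDF_of_neg hx, Set.indicator_of_notMem hx']
  · rw [exponentialPDF_of_nonneg hx, Set.indicator_of_mem (Set.mem_Ici.2 hx),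
      ← ENNReal.ofReal_mul' (exp_nonneg _), mul_assoc, ← exp_add]
    ring_nf

section ExponentialMGF

variable {r t : ℝ}

lemma lintegral_ofReal_exp_mul_expMeasure (hr : 0 ≤ r) (ht : t < r) :
    ∫⁻ x, ENNReal.ofReal (exp (t * x)) ∂expMeasure r = ENNReal.ofReal (r / (r - t)) := by
  have hint : IntegrableOn (fun x ↦ r * exp ((t - r) * x)) (Set.Ioi 0) :=
    (integrableOn_exp_mul_Ioi (by linarith) 0).const_mul r
  change ∫⁻ x, _ ∂volume.withDensity (exponentialPDF r) = _
  rw [lintegral_withDensity_eq_lintegral_mul _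
      (f := exponentialPDF r) (measurable_exponentialPDFReal r).ennreal_ofReal (by fun_prop)]
  simp only [Pi.mul_apply, exponentialPDF_mul_ofReal_exp_mul r t]
  rw [lintegral_indicator measurableSet_Ici, Measure.restrict_congr_set Ioi_ae_eq_Ici.symm,
    ← ofReal_integral_eq_lintegral_ofReal hint (ae_of_all _ fun x ↦ by positivity),
    integral_const_mul, integral_exp_mul_Ioi (by linarith), mul_zero, exp_zero, neg_div, ← div_neg, neg_sub, mul_one_div]

lemma integrable_exp_mul_expMeasure (hr : 0 ≤ r) (ht : t < r) :
    Integrable (fun x ↦ exp (t * x)) (expMeasure r) := by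
  refine ⟨by fun_prop, ?_⟩
  rw [hasFiniteIntegral_iff_ofReal (ae_of_all _ fun x ↦ (exp_pos _).le),
    lintegral_ofReal_exp_mul_expMeasure hr ht]
  exact ENNReal.ofReal_lt_top

lemma mgf_id_expMeasure (hr : 0 ≤ r) (ht : t < r) : mgf id (expMeasure r) t = r / (r - t) := by
  rw [mgf, integral_eq_lintegral_of_nonneg_ae (ae_of_all _ fun x ↦ (exp_pos _).le) (by fun_prop)]
  simp only [id, lintegral_ofReal_exp_mul_expMeasure hr ht]
  exact ENNReal.toReal_ofReal (div_nonneg hr (by linarith))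

end ExponentialMGF

lemma ProbabilityTheory.iIndepFun.measure_sum_le_le_of_map_eq_expMeasure {Ω ι : Type*}
    [MeasurableSpace Ω] {μ : Measure Ω} {X : ι → Ω → ℝ} (hXmeas : ∀ i, Measurable (X i))
    (hXindep : iIndepFun X μ)
    {r : ℝ} (hr : 0 < r) (hXdist : ∀ i, μ.map (X i) = expMeasure r)
    (s : Finset ι) {t : ℝ} (ht : 0 < t) (hts : r * t ≤ #s) :
    μ {ω | ∑ i ∈ s, X i ω ≤ t} ≤
      ENNReal.ofReal (exp (#s - r * t) * (r * t / #s) ^ #s) := by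
  have := hXindep.isProbabilityMeasure
  have hs : (0 : ℝ) < #s := lt_of_lt_of_le (by positivity) hts
  -- the Chernoff parameter `-θ` minimising `exp (θ t) * (r / (r + θ)) ^ #s`
  set θ : ℝ := #s / t - r with hθ
  have hθ_nonneg : 0 ≤ θ := by
    rw [hθ, sub_nonneg, le_div_iff₀ ht]; exact hts
  have hθr : -θ < r := by rw [hθ]; linarith [div_pos hs ht]
  have hmgf : ∀ i, mgf (X i) μ (-θ) = r * t / #s := fun i ↦ by
    rw [← mgf_id_map (hXmeas i).aemeasurable, hXdist i, mgf_id_expMeasure hr.le hθr, hθ,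
      sub_neg_eq_add, add_sub_cancel, div_div_eq_mul_div]
  have hint : ∀ i ∈ s, Integrable (fun ω ↦ exp (-θ * X i ω)) μ := fun i _ ↦ by
    have h := integrable_exp_mul_expMeasure hr.le hθr
    rw [← hXdist i] at h
    exact h.comp_measurable (hXmeas i)
  have hchernoff := measure_le_le_exp_mul_mgf t (neg_nonpos.2 hθ_nonneg)
    (hXindep.integrable_exp_mul_sum hXmeas hint)
  rw [hXindep.mgf_sum hXmeas, Finset.prod_congr rfl fun i _ ↦ hmgf i, Finset.prod_const,
    neg_neg, hθ, sub_mul, div_mul_cancel₀ _ ht.ne', mul_comm r t] at hchernoff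
  simp only [Finset.sum_apply] at hchernoff
  rw [← ofReal_measureReal]
  exact ENNReal.ofReal_le_ofReal (by rwa [mul_comm t r] at hchernoff)

lemma Nat.choose_le_exp_one_mul_div_pow (N m : ℕ) :
    (N.choose m : ℝ) ≤ (exp 1 * N / m) ^ m := by
  calc (N.choose m : ℝ) ≤ (N : ℝ) ^ m / m.factorial := Nat.choose_le_pow_div m N
    _ = (N / m : ℝ) ^ m * ((m : ℝ) ^ m / m.factorial) := by
        rcases m.eq_zero_or_pos with rfl | hm
        · simp
        · rw [div_pow, mul_div_assoc', div_mul_cancel₀ _ (by positivity)]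
    _ ≤ (N / m : ℝ) ^ m * exp m := by gcongr; exact pow_div_factorial_le_exp _ m.cast_nonneg m
    _ = (exp 1 * N / m) ^ m := by rw [← exp_one_pow, ← mul_pow, mul_comm, mul_div_assoc]

lemma choose_mul_exp_sub_mul_div_pow_le (N m : ℕ) {t : ℝ} (ht : 0 ≤ t) :
    (N.choose m : ℝ) * (exp (m - t) * (t / m) ^ m) ≤ (exp 2 * (N * t / m ^ 2)) ^ m :=
  calc (N.choose m : ℝ) * (exp (m - t) * (t / m) ^ m)
      ≤ (exp 1 * N / m) ^ m * (exp 1 ^ m * (t / m) ^ m) := by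
        rw [exp_one_pow]
        gcongr
        · exact Nat.choose_le_exp_one_mul_div_pow N m
        · linarith
    _ = (exp 2 * (N * t / m ^ 2)) ^ m := by
        rw [← mul_pow, ← mul_pow, show (2 : ℝ) = 1 + 1 by norm_num, exp_add]
        ring

lemma measure_iInf_sum_le_le_choose_mul {Ω ι : Type*} [MeasurableSpace Ω] [Fintype ι]
    (μ : Measure Ω) (X : ι → Ω → ℝ) {m : ℕ} (hm : m ≤ Fintype.card ι) (t : ℝ) {B : ℝ≥0∞}
    (hB : ∀ s : Finset ι, #s = m → μ {ω | ∑ i ∈ s, X i ω ≤ t} ≤ B) :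
    μ {ω | ⨅ s : {s : Finset ι // #s = m}, ∑ i ∈ s.1, X i ω ≤ t} ≤
      (Fintype.card ι).choose m * B := by
  obtain ⟨s₀, -, hs₀⟩ := Finset.exists_subset_card_eq (s := Finset.univ) (by simpa using hm)
  have : Nonempty {s : Finset ι // #s = m} := ⟨⟨s₀, hs₀⟩⟩
  calc μ {ω | ⨅ s : {s : Finset ι // #s = m}, ∑ i ∈ s.1, X i ω ≤ t}
      ≤ μ (⋃ s : {s : Finset ι // #s = m}, {ω | ∑ i ∈ s.1, X i ω ≤ t}) := by
        refine measure_mono fun ω hω ↦ ?_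
        obtain ⟨s, hs⟩ := exists_eq_ciInf_of_finite
          (f := fun s : {s : Finset ι // #s = m} ↦ ∑ i ∈ s.1, X i ω)
        exact Set.mem_iUnion.2 ⟨s, show _ ≤ t by rw [hs]; exact hω⟩
    _ ≤ ∑ s : {s : Finset ι // #s = m}, μ {ω | ∑ i ∈ s.1, X i ω ≤ t} :=
        measure_iUnion_fintype_le _ _
    _ ≤ ∑ _s : {s : Finset ι // #s = m}, B := Finset.sum_le_sum fun s _ ↦ hB s.1 s.2
    _ = (Fintype.card ι).choose m * B := by
        rw [Finset.sum_const, Finset.card_univ, Fintype.card_finset_len, nsmul_eq_mul]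

lemma measure_iInf_sum_le_le_of_map_eq_expMeasure {Ω ι : Type*} [MeasurableSpace Ω]
    [Fintype ι] {μ : Measure Ω} {X : ι → Ω → ℝ} (hXmeas : ∀ i, Measurable (X i))
    (hXindep : iIndepFun X μ) {r : ℝ} (hr : 0 < r) (hXdist : ∀ i, μ.map (X i) = expMeasure r)
    {m : ℕ} (hm : m ≤ Fintype.card ι) {t : ℝ} (ht : 0 < t) (htm : r * t ≤ m) :
    μ {ω | ⨅ s : {s : Finset ι // #s = m}, ∑ i ∈ s.1, X i ω ≤ t} ≤
      ENNReal.ofReal ((exp 2 * (Fintype.card ι * (r * t) / m ^ 2)) ^ m) :=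
  calc μ {ω | ⨅ s : {s : Finset ι // #s = m}, ∑ i ∈ s.1, X i ω ≤ t}
      ≤ (Fintype.card ι).choose m * ENNReal.ofReal (exp (m - r * t) * (r * t / m) ^ m) :=
        measure_iInf_sum_le_le_choose_mul μ X hm t fun s hs ↦ by
          subst hs
          exact hXindep.measure_sum_le_le_of_map_eq_expMeasure hXmeas hr hXdist s ht htm
    _ = ENNReal.ofReal ((Fintype.card ι).choose m * (exp (m - r * t) * (r * t / m) ^ m)) := by
        rw [ENNReal.ofReal_mul (Nat.cast_nonneg _), ENNReal.ofReal_natCast]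
    _ ≤ _ := ENNReal.ofReal_le_ofReal
        (choose_mul_exp_sub_mul_div_pow_le _ _ (mul_pos hr ht).le)

theorem stmt_14_general {Ω : Type*} [MeasurableSpace Ω]
    (μ : Measure Ω) [IsProbabilityMeasure μ]
    (n E : ℕ) (hn : 2 ≤ n) (β : ℝ) (hβ : 0 < β)
    (hE : (E : ℝ) ≤ β * n * (n - 1) / 2)
    -- the edge weights: E i.i.d. Exp(1) random variables
    (X : Fin E → Ω → ℝ) (hXmeas : ∀ i, Measurable (X i))
    (hXindep : iIndepFun X μ)
    (hXdist : ∀ i, μ.map (X i) = expMeasure 1)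
    -- S m = sum of the m lightest weights
    (S : ℕ → Ω → ℝ)
    (hS : ∀ m ω, S m ω = ⨅ s : {s : Finset (Fin E) // s.card = m}, ∑ i ∈ s.1, X i ω)
    -- m = φ·n with φ ≤ (n-1)/n
    (m : ℕ) (hm1 : 1 ≤ m) (hmE : m ≤ E)
    (φ : ℝ) (hφ : φ = (m : ℝ) / n)
    (c : ℝ) (hc0 : 0 ≤ c) (hc1 : c ≤ 2 * φ ^ 2 / Real.exp 1) :
    μ {ω | S m ω ≤ c / β} ≤
      ENNReal.ofReal (Real.exp (φ * n * (2 + Real.log (c / (2 * φ ^ 2))))) := by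
  have hn0 : (0 : ℝ) < n := by exact_mod_cast (by omega : 0 < n)
  have hm0 : (0 : ℝ) < m := by exact_mod_cast hm1
  have hφn : φ * n = m := by rw [hφ, div_mul_cancel₀ _ hn0.ne']
  have hφ0 : 0 < φ := by rw [hφ]; positivity
  rcases hc0.eq_or_lt with rfl | hc
  · -- `log 0 = 0`, so the bound is `exp (2 m) ≥ 1`
    refine prob_le_one.trans ?_
    rw [zero_div, log_zero, add_zero, hφn, ← ENNReal.ofReal_one]
    exact ENNReal.ofReal_le_ofReal (one_le_exp (by positivity))
  have hEn : 2 * (E : ℝ) ≤ β * n ^ 2 := by nlinarith [mul_nonneg hβ.le hn0.le]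
  have hmE' : (m : ℝ) ≤ E := by exact_mod_cast hmE
  have hφE : 2 * φ ^ 2 * E ≤ β * m ^ 2 := by
    rw [← hφn]
    nlinarith [mul_le_mul_of_nonneg_left hEn (sq_nonneg φ)]
  have htm : c / β ≤ m := by
    have h2φ : 2 * φ ^ 2 ≤ β * m :=
      le_of_mul_le_mul_right (by nlinarith [mul_le_mul_of_nonneg_left hmE' (sq_nonneg φ)]) hm0
    rw [div_le_iff₀ hβ]
    calc c ≤ 2 * φ ^ 2 / exp 1 := hc1
      _ ≤ 2 * φ ^ 2 := div_le_self (by positivity) (one_le_exp zero_le_one)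
      _ ≤ m * β := by linarith
  have hEt : E * (c / β) / m ^ 2 ≤ c / (2 * φ ^ 2) := by
    rw [div_le_div_iff₀ (by positivity) (by positivity)]
    calc E * (c / β) * (2 * φ ^ 2) = c / β * (2 * φ ^ 2 * E) := by ring
      _ ≤ c / β * (β * m ^ 2) := by gcongr
      _ = c * m ^ 2 := by field_simp
  calc μ {ω | S m ω ≤ c / β}
      ≤ ENNReal.ofReal ((exp 2 * (E * (1 * (c / β)) / m ^ 2)) ^ m) := by
        simpa only [hS, Fintype.card_fin] using
          measure_iInf_sum_le_le_of_map_eq_expMeasure hXmeas hXindep one_pos hXdist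
            (by simpa using hmE) (by positivity) (by rwa [one_mul])
    _ ≤ ENNReal.ofReal ((exp 2 * (c / (2 * φ ^ 2))) ^ m) := by
        rw [one_mul]
        gcongr
    _ = ENNReal.ofReal (exp (φ * n * (2 + log (c / (2 * φ ^ 2))))) := by
        rw [hφn, exp_nat_mul, exp_add, exp_log (by positivity)]

theorem stmt_14 {Ω : Type*} [MeasurableSpace Ω]
    (μ : Measure Ω) [IsProbabilityMeasure μ]
    (n E : ℕ) (hn : 2 ≤ n) (β : ℝ) (hβ : 0 < β)
    (hE : (E : ℝ) ≤ β * n * (n - 1) / 2)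
    -- the edge weights: E i.i.d. Exp(1) random variables
    (X : Fin E → Ω → ℝ) (hXmeas : ∀ i, Measurable (X i))
    (hXindep : iIndepFun X μ)
    (hXdist : ∀ i, μ.map (X i) = expMeasure 1)
    -- S m = sum of the m lightest weights
    (S : ℕ → Ω → ℝ)
    (hS : ∀ m ω, S m ω = ⨅ s : {s : Finset (Fin E) // s.card = m}, ∑ i ∈ s.1, X i ω)
    -- m = φ·n with φ ≤ (n-1)/n
    (m : ℕ) (hm1 : 1 ≤ m) (hmn : m ≤ n - 1) (hmE : m ≤ E)
    (φ : ℝ) (hφ : φ = (m : ℝ) / n)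
    (c : ℝ) (hc0 : 0 ≤ c) (hc1 : c ≤ 2 * φ ^ 2 / Real.exp 1) :
    μ {ω | S m ω ≤ c / β} ≤
      ENNReal.ofReal (Real.exp (φ * n * (2 + Real.log (c / (2 * φ ^ 2))))) :=
  stmt_14_general μ n E hn β hβ hE X hXmeas hXindep hXdist S hS m hm1 hmE φ hφ c hc0 hc1
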